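/- arXiv:1011.4749 — 10 statements merged into one kernel-verified Lean document; each statement's English description precedes it below -/
import Mathlib

section
/- Let G be a connected graph (possibly infinite). A set B of edges of G is a bond (a minimal non-empty edge cut) if and only if B is minimal with the property of meeting the edge set of every spanning tree of G. -/
variable {V : Type*}

/-- The cut of a graph `G` determined by a vertex set `A`: all edges of `G` with
one endvertex in `A` and the other outside `A`. -/
def cutEdges (G : SimpleGraph V) (A : Set V) : Set (Sym2 V) :=
  {e | e ∈ G.edgeSet ∧ ∃ u v : V, e = s(u, v) ∧ u ∈ A ∧ v ∉ A}

/-- A bond of `G`: a minimal non-empty cut. -/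
def IsBond (G : SimpleGraph V) (B : Set (Sym2 V)) : Prop :=
  Minimal (fun D => D.Nonempty ∧ ∃ A : Set V, D = cutEdges G A) B

/-- A spanning tree of `G`: a spanning subgraph that is connected and acyclic. -/
def IsSpanningTree (G : SimpleGraph V) (T : G.Subgraph) : Prop :=
  T.IsSpanning ∧ T.Connected ∧ T.coe.IsAcyclic

/-!
An edge set meets every spanning tree exactly when it contains a non-empty cut: a non-empty cut
separates two vertices, and every spanning tree joins them; conversely, if `S` contains no
non-empty cut then `G - S` is still connected, so a spanning tree of `G - S` avoids `S`.
Hence the edge sets meeting every spanning tree are precisely the edge sets containing a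
non-empty cut, and their minimal elements are the minimal non-empty cuts.
-/

open SimpleGraph

lemma cutEdges_subset_edgeSet (G : SimpleGraph V) (A : Set V) : cutEdges G A ⊆ G.edgeSet :=
  fun _ he => he.1

lemma cutEdges_inter_edgeSet_nonempty {G H : SimpleGraph V} (hHG : H ≤ G) (hH : H.Preconnected)
    {A : Set V} {u v : V} (hu : u ∈ A) (hv : v ∉ A) : (cutEdges G A ∩ H.edgeSet).Nonempty := by
  obtain ⟨p⟩ := hH u v
  obtain ⟨d, -, hdA, hdA'⟩ := p.exists_boundary_dart A hu hv
  exact ⟨d.edge, ⟨edgeSet_mono hHG d.edge_mem, d.fst, d.snd, rfl, hdA, hdA'⟩, d.edge_mem⟩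

lemma IsSpanningTree.preconnected_spanningCoe {G : SimpleGraph V} {T : G.Subgraph}
    (hT : IsSpanningTree G T) : T.spanningCoe.Preconnected := by
  obtain ⟨hspan, hconn, -⟩ := hT
  exact ((T.spanningCoeEquivCoeOfSpanning hspan).connected_iff.mpr
    (Subgraph.connected_iff'.mp hconn)).preconnected

lemma cutEdges_inter_edgeSet_nonempty_of_isSpanningTree {G : SimpleGraph V} {A : Set V}
    (hA : (cutEdges G A).Nonempty) {T : G.Subgraph} (hT : IsSpanningTree G T) :
    (cutEdges G A ∩ T.edgeSet).Nonempty := by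
  obtain ⟨-, -, u, v, -, hu, hv⟩ := hA
  rw [← Subgraph.edgeSet_spanningCoe]
  exact cutEdges_inter_edgeSet_nonempty (Subgraph.spanningCoe_le T)
    hT.preconnected_spanningCoe hu hv

lemma isSpanningTree_toSubgraph {G H : SimpleGraph V} (hHG : H ≤ G) (hH : H.IsTree) :
    IsSpanningTree G (toSubgraph H hHG) := by
  have hspan := toSubgraph.isSpanning H hHG
  have e := (toSubgraph H hHG).spanningCoeEquivCoeOfSpanning hspan
  exact ⟨hspan, Subgraph.connected_iff'.mpr (e.connected_iff.mp hH.connected),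
    e.isAcyclic_iff.mp hH.isAcyclic⟩

lemma cutEdges_reachable_deleteEdges_subset (G : SimpleGraph V) (S : Set (Sym2 V)) (a : V) :
    cutEdges G {w | (G.deleteEdges S).Reachable a w} ⊆ S := by
  rintro _ ⟨he, x, y, rfl, hx, hy⟩
  by_contra hS
  exact hy (hx.trans (deleteEdges_adj.mpr ⟨G.mem_edgeSet.mp he, hS⟩).reachable)

lemma exists_nonempty_cutEdges_subset_of_forall_isSpanningTree {G : SimpleGraph V}
    (hG : G.Connected) {S : Set (Sym2 V)}
    (hS : ∀ T : G.Subgraph, IsSpanningTree G T → (S ∩ T.edgeSet).Nonempty) :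
    ∃ A : Set V, (cutEdges G A).Nonempty ∧ cutEdges G A ⊆ S := by
  by_cases hpre : (G.deleteEdges S).Preconnected
  · have := hG.nonempty
    obtain ⟨H, hle, hH⟩ := (Connected.mk hpre).exists_isTree_le
    obtain ⟨e, heS, heH⟩ := hS _ (isSpanningTree_toSubgraph (hle.trans (deleteEdges_le S)) hH)
    rw [← Subgraph.edgeSet_spanningCoe] at heH
    have heG : e ∈ (G.deleteEdges S).edgeSet := edgeSet_mono hle heH
    rw [edgeSet_deleteEdges] at heG
    exact absurd heS heG.2
  · obtain ⟨a, b, hab⟩ : ∃ a b, ¬(G.deleteEdges S).Reachable a b := by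
      simpa [Preconnected] using hpre
    exact ⟨_, (cutEdges_inter_edgeSet_nonempty le_rfl hG.preconnected
      (Reachable.refl a) hab).mono Set.inter_subset_left,
      cutEdges_reachable_deleteEdges_subset G S a⟩

/-- In a connected graph (possibly infinite), a set `B` of edges is a bond if and only
if `B` is minimal with the property of meeting the edge set of every spanning tree. -/
theorem isBond_iff_minimal_meets_every_spanningTree (G : SimpleGraph V) (hG : G.Connected)
    (B : Set (Sym2 V)) :
    IsBond G B ↔
      Minimal (fun D => D ⊆ G.edgeSet ∧
        ∀ T : G.Subgraph, IsSpanningTree G T → (D ∩ T.edgeSet).Nonempty) B := by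
  refine (minimal_iff_minimal_of_imp_of_forall ?_ ?_).symm
  · rintro D ⟨hD, A, rfl⟩
    exact ⟨cutEdges_subset_edgeSet G A,
      fun T hT => cutEdges_inter_edgeSet_nonempty_of_isSpanningTree hD hT⟩
  · rintro D ⟨-, hD⟩
    obtain ⟨A, hA, hAD⟩ := exists_nonempty_cutEdges_subset_of_forall_isSpanningTree hG hD
    exact ⟨_, hAD, hA, A, rfl⟩
end

section
/- The finite bonds of any graph G form the circuits of a finitary matroid on E(G). -/
variable {V : Type*}

/-- A circuit of a (possibly infinite) matroid: a minimal dependent subset of the ground set. -/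
def MatroidCircuit {α : Type*} (M : Matroid α) (C : Set α) : Prop :=
  C ⊆ M.E ∧ ¬ M.Indep C ∧ ∀ D : Set α, D ⊂ C → M.Indep D

/-! Represent each edge `e` by the vector over `ZMod 2`, indexed by closed walks, recording the
parity of the number of traversals of `e`. A closed walk crosses every cut an even number of times,
so a finite bond is linearly dependent. Conversely, a nonempty set `T` of edges summing to zero is
crossed evenly by every closed walk; then for `uv ∈ T`, the vertices reachable from `u` in `G - T`
span a nonempty cut inside `T`, which contains a finite bond. So the circuits of the finitary
matroid represented by these vectors are exactly the finite bonds. -/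

open Set

theorem List.sum_count_eq_countP {α : Type*} [DecidableEq α] (s : Finset α) (l : List α) :
    ∑ a ∈ s, l.count a = l.countP (· ∈ s) := by
  induction l with
  | nil => simp
  | cons b l ih => simp [List.count_cons, List.countP_cons, Finset.sum_add_distrib, ih]

theorem LinearIndepOn.exists_insert_of_encard_lt {ι K W : Type*} [DivisionRing K]
    [AddCommGroup W] [Module K W] {v : ι → W} {I J : Set ι}
    (hI : LinearIndepOn K v I) (hJ : LinearIndepOn K v J) (hIJ : I.encard < J.encard) :
    ∃ e ∈ J, e ∉ I ∧ LinearIndepOn K v (insert e I) := by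
  by_contra! h
  have hspan : Submodule.span K (v '' J) ≤ Submodule.span K (v '' I) := by
    refine Submodule.span_le.2 ?_
    rintro _ ⟨e, heJ, rfl⟩
    by_cases heI : e ∈ I
    · exact Submodule.subset_span (mem_image_of_mem v heI)
    · by_contra hv
      exact h e heJ heI ((linearIndepOn_insert heI).2 ⟨hI, hv⟩)
  rw [← toENat_rank_span_set hI, ← toENat_rank_span_set hJ] at hIJ
  exact hIJ.not_ge (Cardinal.toENat.monotone' (Submodule.rank_mono hspan))

theorem linearDepOn_zmod_two_iff {ι W : Type*} [AddCommGroup W] [Module (ZMod 2) W]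
    {v : ι → W} {s : Set ι} :
    ¬ LinearIndepOn (ZMod 2) v s ↔ ∃ T : Finset ι, ↑T ⊆ s ∧ T.Nonempty ∧ ∑ i ∈ T, v i = 0 := by
  constructor
  · rw [linearDepOn_iff]
    rintro ⟨f, hfs, hsum, hf⟩
    have hone : ∀ i ∈ f.support, f i = 1 := fun i hi => by
      have h01 : ∀ a : ZMod 2, a ≠ 0 → a = 1 := by decide
      exact h01 _ (Finsupp.mem_support_iff.1 hi)
    refine ⟨f.support, hfs, Finsupp.support_nonempty_iff.2 hf, ?_⟩
    rwa [Finset.sum_congr rfl fun i hi => by rw [hone i hi, one_smul]] at hsum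
  · rintro ⟨T, hTs, ⟨i, hi⟩, hsum⟩ hs
    refine not_linearIndepOn_finset_iff.2 ⟨fun _ => 1, ?_, i, hi, one_ne_zero⟩ (hs.mono hTs)
    simpa only [one_smul] using hsum

namespace Matroid

variable {α W : Type*} (K : Type*) [DivisionRing K] [AddCommGroup W] [Module K W]

def ofFun (E : Set α) (v : α → W) : Matroid α :=
  (IndepMatroid.ofFinitaryCardAugment E (fun I => I ⊆ E ∧ LinearIndepOn K v I)
    ⟨empty_subset E, linearIndepOn_empty K v⟩
    (fun _ _ hJ hIJ => ⟨hIJ.trans hJ.1, hJ.2.mono hIJ⟩)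
    (fun I J hI hIfin hJ hJfin hlt => by
      obtain ⟨e, heJ, heI, hins⟩ := hI.2.exists_insert_of_encard_lt hJ.2 (by
        rw [← hIfin.cast_ncard_eq, ← hJfin.cast_ncard_eq]
        exact_mod_cast hlt)
      exact ⟨e, heJ, heI, insert_subset (hJ.1 heJ) hI.1, hins⟩)
    (fun I h => ⟨fun e he => (h {e} (singleton_subset_iff.2 he) (finite_singleton e)).1 rfl,
      linearIndepOn_of_finite I fun J hJ hJfin => (h J hJ hJfin).2⟩)
    (fun _ hI => hI.1)).matroid

variable {K}

theorem ofFun_indep_iff {E : Set α} {v : α → W} {I : Set α} :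
    (ofFun K E v).Indep I ↔ I ⊆ E ∧ LinearIndepOn K v I := Iff.rfl

instance (E : Set α) (v : α → W) : (ofFun K E v).Finitary := by
  unfold ofFun
  infer_instance

end Matroid

theorem matroidCircuit_iff_of_indep_iff {α : Type*} {M : Matroid α} {P : Set α → Prop}
    (hPE : ∀ C, P C → C ⊆ M.E) (hPanti : ∀ C D, P C → P D → D ⊆ C → C ⊆ D)
    (hM : ∀ X, M.Indep X ↔ X ⊆ M.E ∧ ∀ D ⊆ X, ¬ P D) (C : Set α) :
    MatroidCircuit M C ↔ P C := by
  constructor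
  · rintro ⟨hCE, hdep, hmin⟩
    obtain ⟨D, hDC, hD⟩ : ∃ D ⊆ C, P D := by
      by_contra! h
      exact hdep ((hM C).2 ⟨hCE, h⟩)
    obtain rfl | hssub := hDC.eq_or_ssubset
    · exact hD
    · exact absurd hD (((hM D).1 (hmin D hssub)).2 D Subset.rfl)
  · intro hC
    refine ⟨hPE C hC, fun hind => ((hM C).1 hind).2 C Subset.rfl hC, fun D hDC => ?_⟩
    refine (hM D).2 ⟨hDC.subset.trans (hPE C hC), fun D' hD'D hD' => ?_⟩
    exact hDC.not_subset ((hPanti C D' hC hD' (hD'D.trans hDC.subset)).trans hD'D)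

namespace SimpleGraph

variable {G : SimpleGraph V}

theorem mem_cutEdges_iff {A : Set V} {x y : V} (h : G.Adj x y) :
    s(x, y) ∈ cutEdges G A ↔ ¬ (x ∈ A ↔ y ∈ A) := by
  constructor
  · rintro ⟨-, u, v, huv, hu, hv⟩
    rcases Sym2.eq_iff.1 huv with ⟨rfl, rfl⟩ | ⟨rfl, rfl⟩ <;> tauto
  · intro hxy
    by_cases hx : x ∈ A
    · exact ⟨h, x, y, rfl, hx, by tauto⟩
    · exact ⟨h, y, x, Sym2.eq_swap, by tauto, hx⟩

theorem Walk.even_countP_cutEdges_iff (A : Set V) [DecidablePred (· ∈ cutEdges G A)] {x y : V}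
    (w : G.Walk x y) :
    Even (w.edges.countP (· ∈ cutEdges G A)) ↔ (x ∈ A ↔ y ∈ A) := by
  induction w with
  | nil => simp
  | @cons x z y h p ih =>
    rw [Walk.edges_cons, List.countP_cons]
    split_ifs with hcut <;> rw [decide_eq_true_eq, mem_cutEdges_iff h] at hcut
    · rw [Nat.even_add_one, ih]
      tauto
    · rw [add_zero, ih]
      tauto

theorem exists_cutEdges_subset_of_even_countP {T : Set (Sym2 V)} [DecidablePred (· ∈ T)]
    (hTE : T ⊆ G.edgeSet) {e : Sym2 V} (heT : e ∈ T)
    (heven : ∀ (u : V) (w : G.Walk u u), Even (w.edges.countP (· ∈ T))) :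
    ∃ A : Set V, e ∈ cutEdges G A ∧ cutEdges G A ⊆ T := by
  induction e using Sym2.ind with
  | h u v =>
  have huv : G.Adj u v := hTE heT
  set A : Set V := {x | (G.deleteEdges T).Reachable u x}
  have hv : v ∉ A := by
    rintro ⟨p⟩
    have hp : ∀ e ∈ p.edges, e ∉ T := fun e he =>
      ((G.edgeSet_deleteEdges T).subset (p.edges_subset_edgeSet he)).2
    have := heven u (Walk.cons huv (p.mapLe (G.deleteEdges_le T)).reverse)
    rw [Walk.edges_cons, Walk.edges_reverse, Walk.edges_mapLe_eq_edges, List.countP_cons,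
      List.countP_reverse, List.countP_eq_zero.2 fun e he => by simpa using hp e he] at this
    simp [heT] at this
  refine ⟨A, ⟨huv, u, v, rfl, Reachable.refl u, hv⟩, ?_⟩
  rintro _ ⟨hxy, x, y, rfl, hx, hy⟩
  by_contra hT
  exact hy (hx.trans (deleteEdges_adj.2 ⟨hxy, hT⟩).reachable)

theorem exists_isBond_subset {D : Set (Sym2 V)} (hD : D.Finite) (hne : D.Nonempty)
    (hcut : ∃ A, D = cutEdges G A) : ∃ B ⊆ D, IsBond G B := by
  obtain ⟨B, hBD, hB⟩ := (hD.finite_subsets.inter_of_left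
    {X | X.Nonempty ∧ ∃ A, X = cutEdges G A}).isPWO.exists_le_minimal
    (show D ∈ _ from ⟨subset_rfl (a := D), hne, hcut⟩)
  exact ⟨B, hBD, hB.prop.2, fun X hX hXB => hB.2 ⟨hXB.trans hB.prop.1, hX⟩ hXB⟩

variable [DecidableEq V]

variable (G) in
def closedWalkParity (e : Sym2 V) (w : Σ u, G.Walk u u) : ZMod 2 :=
  w.2.edges.count e

theorem sum_closedWalkParity (T : Finset (Sym2 V)) (w : Σ u, G.Walk u u) :
    ∑ e ∈ T, closedWalkParity G e w = (w.2.edges.countP (· ∈ T) : ZMod 2) := by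
  rw [← List.sum_count_eq_countP, Nat.cast_sum]
  rfl

theorem linearIndepOn_closedWalkParity_iff {X : Set (Sym2 V)} (hX : X ⊆ G.edgeSet) :
    LinearIndepOn (ZMod 2) (closedWalkParity G) X ↔ ∀ B ⊆ X, ¬ (B.Finite ∧ IsBond G B) := by
  rw [← not_iff_not, linearDepOn_zmod_two_iff]
  push Not
  constructor
  · rintro ⟨T, hTX, ⟨e, he⟩, hsum⟩
    have heven : ∀ u (w : G.Walk u u), Even (w.edges.countP (· ∈ (T : Set (Sym2 V)))) :=
      fun u w => by
        have := congrFun hsum ⟨u, w⟩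
        rwa [Finset.sum_apply, sum_closedWalkParity, Pi.zero_apply,
          ZMod.natCast_eq_zero_iff_even] at this
    obtain ⟨A, heA, hAT⟩ := exists_cutEdges_subset_of_even_countP (hTX.trans hX) he heven
    obtain ⟨B, hBA, hB⟩ := exists_isBond_subset (T.finite_toSet.subset hAT) ⟨e, heA⟩ ⟨A, rfl⟩
    exact ⟨B, hBA.trans (hAT.trans hTX), T.finite_toSet.subset (hBA.trans hAT), hB⟩
  · rintro ⟨B, hBX, hBfin, hB⟩
    obtain ⟨⟨e, he⟩, A, rfl⟩ := hB.prop
    refine ⟨hBfin.toFinset, by simpa using hBX, ⟨e, by simpa using he⟩, funext fun ⟨u, w⟩ => ?_⟩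
    rw [Finset.sum_apply, sum_closedWalkParity, Pi.zero_apply, ZMod.natCast_eq_zero_iff_even]
    classical
    simpa using (w.even_countP_cutEdges_iff A).2 Iff.rfl

end SimpleGraph

theorem IsBond.subset_edgeSet {G : SimpleGraph V} {B : Set (Sym2 V)} (hB : IsBond G B) :
    B ⊆ G.edgeSet := by
  obtain ⟨-, A, rfl⟩ := hB.prop
  exact fun _ he => he.1

/-- The finite bonds of any graph `G` form the circuits of a finitary matroid on `E(G)`. -/
theorem finite_bond_matroid_exists (G : SimpleGraph V) :
    ∃ M : Matroid (Sym2 V), M.E = G.edgeSet ∧ M.Finitary ∧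
      ∀ C : Set (Sym2 V), MatroidCircuit M C ↔ (C.Finite ∧ IsBond G C) := by
  classical
  refine ⟨Matroid.ofFun (ZMod 2) G.edgeSet G.closedWalkParity, rfl, inferInstance,
    matroidCircuit_iff_of_indep_iff (fun C hC => hC.2.subset_edgeSet)
      (fun C D hC hD hDC => hC.2.2 hD.2.prop hDC) fun X => ?_⟩
  rw [Matroid.ofFun_indep_iff]
  exact and_congr_right G.linearIndepOn_closedWalkParity_iff
end

section
/- For a finite ground set E, a function r : {(A,B) : B ⊆ A ⊆ E} → ℕ satisfies (R1) r(A|B) ≤ |A\B|, (R2) r(A|A∩B) ≥ r(A∪B|B) for all A,B, and (R3) r(A|C) = r(A|B) + r(B|C) for C ⊆ B ⊆ A, if and only if the function R(A) := r(A|∅) is the rank function of a matroid on E and r(A|B) = R(A) − R(B) for all B ⊆ A. -/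
/-! Additivity (R3) along `∅ ⊆ B ⊆ A` forces `r A B = R A - R B` with `R A := r A ∅`; under this
identification (R1) becomes `R A - R B ≤ |A \ B|`, equivalent to unit increase, and (R2) becomes
`R (A ∪ B) - R B ≤ R A - R (A ∩ B)`, which is submodularity. -/

open Finset

/-- `R` is the rank function of a matroid on the finite ground set `α`:
`R ∅ = 0`, unit-increase, submodularity, and `R A ≤ |A|`. -/
def IsMatroidRankFunction {α : Type*} [DecidableEq α] (R : Finset α → ℕ) : Prop :=
  R ∅ = 0 ∧
  (∀ (A : Finset α) (x : α), R A ≤ R (insert x A) ∧ R (insert x A) ≤ R A + 1) ∧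
  (∀ A B : Finset α, R (A ∪ B) + R (A ∩ B) ≤ R A + R B) ∧
  (∀ A : Finset α, R A ≤ A.card)

theorem eq_sub_of_chain_additive {α : Type*} {r : Finset α → Finset α → ℕ}
    (hchain : ∀ A B C : Finset α, C ⊆ B → B ⊆ A → r A C = r A B + r B C)
    {A B : Finset α} (hBA : B ⊆ A) : r A B = r A ∅ - r B ∅ := by
  have := hchain A B ∅ (empty_subset _) hBA
  omega

section

variable {α : Type*} [DecidableEq α] {R : Finset α → ℕ}

theorem le_union_and_union_le_add_card_of_unit_increase
    (hR : ∀ (A : Finset α) (x : α), R A ≤ R (insert x A) ∧ R (insert x A) ≤ R A + 1)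
    (B S : Finset α) : R B ≤ R (B ∪ S) ∧ R (B ∪ S) ≤ R B + #S := by
  induction S using Finset.induction_on with
  | empty => simp
  | insert x S hx ih =>
    rw [union_insert, card_insert_of_notMem hx]
    have := hR (B ∪ S) x
    omega

theorem le_of_subset_of_unit_increase
    (hR : ∀ (A : Finset α) (x : α), R A ≤ R (insert x A) ∧ R (insert x A) ≤ R A + 1)
    {A B : Finset α} (hBA : B ⊆ A) : R B ≤ R A := by
  simpa [union_eq_right.mpr hBA] using (le_union_and_union_le_add_card_of_unit_increase hR B A).1

theorem le_add_card_sdiff_of_unit_increase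
    (hR : ∀ (A : Finset α) (x : α), R A ≤ R (insert x A) ∧ R (insert x A) ≤ R A + 1)
    {A B : Finset α} (hBA : B ⊆ A) : R A ≤ R B + #(A \ B) := by
  simpa [union_sdiff_of_subset hBA] using
    (le_union_and_union_le_add_card_of_unit_increase hR B (A \ B)).2

namespace IsMatroidRankFunction

theorem mono (hR : IsMatroidRankFunction R) {A B : Finset α} (hBA : B ⊆ A) : R B ≤ R A :=
  le_of_subset_of_unit_increase hR.2.1 hBA

theorem sub_le_card_sdiff (hR : IsMatroidRankFunction R) {A B : Finset α} (hBA : B ⊆ A) :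
    R A - R B ≤ #(A \ B) :=
  Nat.sub_le_iff_le_add'.mpr (le_add_card_sdiff_of_unit_increase hR.2.1 hBA)

theorem sub_union_le_sub_inter (hR : IsMatroidRankFunction R) (A B : Finset α) :
    R (A ∪ B) - R B ≤ R A - R (A ∩ B) := by
  have := hR.2.2.1 A B
  have := hR.mono (subset_union_right : B ⊆ A ∪ B)
  have := hR.mono (inter_subset_left : A ∩ B ⊆ A)
  omega

theorem sub_eq_sub_add_sub (hR : IsMatroidRankFunction R) {A B C : Finset α} (hCB : C ⊆ B)
    (hBA : B ⊆ A) : R A - R C = (R A - R B) + (R B - R C) := by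
  have := hR.mono hBA
  have := hR.mono hCB
  omega

end IsMatroidRankFunction

theorem isMatroidRankFunction_of_relative_rank_axioms {r : Finset α → Finset α → ℕ}
    (hcard : ∀ A B : Finset α, B ⊆ A → r A B ≤ #(A \ B))
    (hsubmod : ∀ A B : Finset α, r (A ∪ B) B ≤ r A (A ∩ B))
    (hchain : ∀ A B C : Finset α, C ⊆ B → B ⊆ A → r A C = r A B + r B C) :
    IsMatroidRankFunction (fun A => r A ∅) := by
  have hsub {A B : Finset α} (hBA : B ⊆ A) : r A ∅ = r A B + r B ∅ :=
    hchain A B ∅ (empty_subset _) hBA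
  refine ⟨?empty, fun A x => ?unit_increase, fun A B => ?submodular, fun A => ?le_card⟩
  case empty => simpa using hsub (subset_refl (∅ : Finset α))
  case unit_increase =>
    show r A ∅ ≤ r (insert x A) ∅ ∧ r (insert x A) ∅ ≤ r A ∅ + 1
    have hstep := hcard (insert x A) A (subset_insert x A)
    have hsingle : #(insert x A \ A) ≤ 1 :=
      (card_le_card (by grind : insert x A \ A ⊆ {x})).trans_eq (card_singleton x)
    have := hsub (subset_insert x A)
    omega
  case submodular =>
    show r (A ∪ B) ∅ + r (A ∩ B) ∅ ≤ r A ∅ + r B ∅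
    have := hsub (subset_union_right : B ⊆ A ∪ B)
    have := hsub (inter_subset_left : A ∩ B ⊆ A)
    have := hsubmod A B
    omega
  case le_card => simpa using hcard A ∅ (empty_subset A)

end

theorem relative_rank_axioms_iff_rank_function_general {α : Type*} [DecidableEq α]
    (r : Finset α → Finset α → ℕ) :
    ((∀ A B : Finset α, B ⊆ A → r A B ≤ (A \ B).card) ∧
     (∀ A B : Finset α, r (A ∪ B) B ≤ r A (A ∩ B)) ∧
     (∀ A B C : Finset α, C ⊆ B → B ⊆ A → r A C = r A B + r B C)) ↔
    (IsMatroidRankFunction (fun A => r A ∅) ∧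
     ∀ A B : Finset α, B ⊆ A → r A B = r A ∅ - r B ∅) := by
  constructor
  · rintro ⟨hcard, hsubmod, hchain⟩
    exact ⟨isMatroidRankFunction_of_relative_rank_axioms hcard hsubmod hchain,
      fun A B => eq_sub_of_chain_additive hchain⟩
  · rintro ⟨hR, hr⟩
    refine ⟨fun A B hBA => ?_, fun A B => ?_, fun A B C hCB hBA => ?_⟩
    · rw [hr A B hBA]
      exact hR.sub_le_card_sdiff hBA
    · rw [hr _ _ subset_union_right, hr _ _ inter_subset_left]
      exact hR.sub_union_le_sub_inter A B
    · rw [hr A C (hCB.trans hBA), hr A B hBA, hr B C hCB]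
      exact hR.sub_eq_sub_add_sub hCB hBA

/-- For a finite ground set, a relative rank function `r` satisfies (R1), (R2) and (R3)
if and only if `R A := r A ∅` is the rank function of a matroid and
`r A B = R A - R B` whenever `B ⊆ A`. -/
theorem relative_rank_axioms_iff_rank_function {α : Type*} [Fintype α] [DecidableEq α]
    (r : Finset α → Finset α → ℕ) :
    ((∀ A B : Finset α, B ⊆ A → r A B ≤ (A \ B).card) ∧
     (∀ A B : Finset α, r (A ∪ B) B ≤ r A (A ∩ B)) ∧
     (∀ A B C : Finset α, C ⊆ B → B ⊆ A → r A C = r A B + r B C)) ↔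
    (IsMatroidRankFunction (fun A => r A ∅) ∧
     ∀ A B : Finset α, B ⊆ A → r A B = r A ∅ - r B ∅) :=
  relative_rank_axioms_iff_rank_function_general r
end

section
/- Let F be a field, A a set, and X a set of functions A → F that is thin, i.e., for every a ∈ A only finitely many x ∈ X satisfy x(a) ≠ 0. Then the span ⟨X⟩, consisting of all pointwise sums Σ_{x∈X'} α_x x over thin subsets X' ⊆ X with coefficients α_x ∈ F, is a closed subset of F^A in the product topology (F discrete). -/
variable {A F : Type*}

/-- A set `X` of functions `A → F` is thin if for every `a ∈ A` only finitely many
`x ∈ X` have `x a ≠ 0`. -/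
def Thin [Zero F] (X : Set (A → F)) : Prop :=
  ∀ a : A, {x ∈ X | x a ≠ 0}.Finite

/-- The thin span of `X`: all pointwise sums `Σ_{x ∈ X'} α_x • x` over thin subsets
`X' ⊆ X` with coefficients in `F`. -/
def thinSpan [Field F] (X : Set (A → F)) : Set (A → F) :=
  {f | ∃ (X' : Set (A → F)) (α : (A → F) → F), X' ⊆ X ∧ Thin X' ∧
        f = fun a => ∑ᶠ x ∈ X', α x * x a}

/-! The thin span is the image of `α ↦ (a ↦ Σ_{x ∈ X} α x * x a)`, so `f` lies in it iff
the linear system `Σ_{x ∈ X} α x * x a = f a` (`a ∈ A`) in the unknowns `α` is solvable.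
Each equation involves only finitely many unknowns, and `f` lies in the closure iff every
finite subsystem is solvable. That already solves the whole system: a linear relation between
the equations involves finitely many of them, hence is respected by the right-hand sides, so
`equation a ↦ f a` is a well-defined functional on the span of the equations, and any
extension of it to all finitely supported coefficient vectors yields a solution. -/

open Set Finsupp

section LinearEquations

variable {K V V' W ι κ : Type*} [DivisionRing K] [AddCommGroup V] [Module K V]
  [AddCommGroup V'] [Module K V'] [AddCommGroup W] [Module K W]

theorem LinearMap.exists_comp_eq_of_ker_le (f : V →ₗ[K] V') (g : V →ₗ[K] W)
    (h : LinearMap.ker f ≤ LinearMap.ker g) : ∃ ψ : V' →ₗ[K] W, ψ ∘ₗ f = g := by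
  obtain ⟨r, hr⟩ := ((LinearMap.ker f).liftQ f le_rfl).exists_leftInverse_of_injective
    (Submodule.ker_liftQ_eq_bot' _ _ rfl)
  refine ⟨(LinearMap.ker f).liftQ g h ∘ₗ r, LinearMap.ext fun v => ?_⟩
  have hrv : r (f v) = Submodule.Quotient.mk v := LinearMap.congr_fun hr (Submodule.Quotient.mk v)
  simp [hrv]

theorem exists_linearMap_eq_of_forall_finset (e : ι → V) (b : ι → W)
    (h : ∀ s : Finset ι, ∃ φ : V →ₗ[K] W, ∀ i ∈ s, φ (e i) = b i) :
    ∃ φ : V →ₗ[K] W, ∀ i, φ (e i) = b i := by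
  have hker : LinearMap.ker (linearCombination K e) ≤ LinearMap.ker (linearCombination K b) := by
    intro c hc
    obtain ⟨φ, hφ⟩ := h c.support
    rw [LinearMap.mem_ker] at hc ⊢
    calc linearCombination K b c = linearCombination K (φ ∘ e) c := by
          simp only [linearCombination_apply]
          exact Finsupp.sum_congr fun i hi => by simp [hφ i hi]
      _ = 0 := by rw [← apply_linearCombination, hc, map_zero]
  obtain ⟨φ, hφ⟩ := (linearCombination K e).exists_comp_eq_of_ker_le _ hker
  exact ⟨φ, fun i => by simpa using LinearMap.congr_fun hφ (single i 1)⟩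

theorem Finsupp.linearCombination_single_one_eq (φ : (κ →₀ K) →ₗ[K] W) :
    linearCombination K (fun k => φ (single k 1)) = φ :=
  lhom_ext fun k r => by simp [← map_smul]

theorem Finsupp.exists_linearCombination_eq_of_forall_finset (c : ι → κ →₀ K) (b : ι → W)
    (h : ∀ s : Finset ι, ∃ α : κ → W, ∀ i ∈ s, linearCombination K α (c i) = b i) :
    ∃ α : κ → W, ∀ i, linearCombination K α (c i) = b i := by
  obtain ⟨φ, hφ⟩ := exists_linearMap_eq_of_forall_finset c b fun s =>
    let ⟨α, hα⟩ := h s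
    ⟨linearCombination K α, hα⟩
  exact ⟨fun k => φ (single k 1), by rwa [linearCombination_single_one_eq]⟩

theorem Finsupp.isClosed_range_linearCombination_comp [TopologicalSpace W] [DiscreteTopology W]
    (c : ι → κ →₀ K) :
    IsClosed (range fun (α : κ → W) i => linearCombination K α (c i)) := by
  refine isClosed_of_closure_subset fun b hb => ?_
  refine (exists_linearCombination_eq_of_forall_finset c b fun s => ?_).imp fun α hα => funext hα
  have hU : IsOpen ((s : Set ι).pi fun i => ({b i} : Set W)) :=
    isOpen_set_pi s.finite_toSet fun _ _ => isOpen_discrete _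
  obtain ⟨_, hbU, α, rfl⟩ := mem_closure_iff.1 hb _ hU fun i _ => rfl
  exact ⟨α, hbU⟩

end LinearEquations

namespace Thin

variable [Field F] {X : Set (A → F)}

noncomputable def eval (hX : Thin X) (a : A) : (A → F) →₀ F :=
  ofSupportFinite (X.indicator fun x => x a) (by rw [support_indicator]; exact hX a)

theorem eval_apply (hX : Thin X) (a : A) (x : A → F) : hX.eval a x = X.indicator (· a) x := rfl

theorem finsum_mem_mul_eq (hX : Thin X) (α : (A → F) → F) (a : A) :
    ∑ᶠ x ∈ X, α x * x a = linearCombination F α (hX.eval a) := by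
  have hpt : X.indicator (fun x => α x * x a) = fun x => hX.eval a x • α x := by
    ext x
    by_cases hx : x ∈ X <;> simp [eval_apply, hx, mul_comm]
  rw [finsum_mem_def, hpt, linearCombination_apply, Finsupp.sum]
  exact finsum_eq_sum_of_support_subset _
    ((Function.support_smul_subset_left (hX.eval a) α).trans_eq (hX.eval a).fun_support_eq)

end Thin

theorem thinSpan_eq_range [Field F] {X : Set (A → F)} (hX : Thin X) :
    thinSpan X = range fun (α : (A → F) → F) a => linearCombination F α (hX.eval a) := by
  ext f
  constructor
  · rintro ⟨X', α, hX'X, -, rfl⟩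
    refine ⟨X'.indicator α, funext fun a => ?_⟩
    dsimp only
    rw [← hX.finsum_mem_mul_eq (X'.indicator α) a, finsum_mem_def, finsum_mem_def]
    congr 1 with x
    by_cases hx' : x ∈ X'
    · simp [hx', hX'X hx']
    · by_cases hx : x ∈ X <;> simp [hx, hx']
  · rintro ⟨α, rfl⟩
    exact ⟨X, α, subset_rfl, hX, funext fun a => (hX.finsum_mem_mul_eq α a).symm⟩

/-- If `X` is a thin set of functions `A → F`, then its thin span is a closed subset
of `F^A` in the product topology, `F` carrying the discrete topology. -/
theorem thinSpan_isClosed [Field F] [TopologicalSpace F] [DiscreteTopology F]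
    (X : Set (A → F)) (hX : Thin X) :
    IsClosed (thinSpan X) := by
  rw [thinSpan_eq_range hX]
  exact isClosed_range_linearCombination_comp _
end

section
/- Let F be a field and A a set. For any set X of functions A → F, the double span satisfies ⟨⟨X⟩⟩ ⊆ closure(⟨X⟩), where closure is taken in the product topology on F^A with F discrete. -/
variable {A F : Type*}

/-!
A basic neighbourhood of `f = ∑ y ∈ Y, α y • y` in the product topology constrains only
finitely many coordinates `I`, and since `Y` is thin only finitely many `y ∈ Y` are nonzero
somewhere on `I`. The finite subsum over those `y` agrees with `f` on `I`, and it lies in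
`thinSpan X` because the thin span is a subspace.
-/

theorem mem_closure_pi_of_forall_finset {ι : Type*} {π : ι → Type*}
    [∀ i, TopologicalSpace (π i)] {s : Set (∀ i, π i)} {f : ∀ i, π i}
    (h : ∀ I : Finset ι, ∃ g ∈ s, ∀ i ∈ I, g i = f i) : f ∈ closure s := by
  refine mem_closure_iff.mpr fun U hU hfU => ?_
  obtain ⟨I, u, hu, hIU⟩ := isOpen_pi_iff.mp hU f hfU
  obtain ⟨g, hgs, hgf⟩ := h I
  exact ⟨g, hIU fun i hi => (hgf i hi).symm ▸ (hu i hi).2, hgs⟩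

open Function

namespace Thin

theorem mono [Zero F] {s t : Set (A → F)} (ht : Thin t) (hst : s ⊆ t) : Thin s :=
  fun a => (ht a).subset fun _ hx => ⟨hst hx.1, hx.2⟩

theorem union [Zero F] {s t : Set (A → F)} (hs : Thin s) (ht : Thin t) : Thin (s ∪ t) :=
  fun a => ((hs a).union (ht a)).subset fun _ ⟨hx, hxa⟩ =>
    hx.imp (⟨·, hxa⟩) (⟨·, hxa⟩)

theorem finite_support_mul_apply [MulZeroClass F] {c : (A → F) → F} (hc : Thin (support c))
    (a : A) : (support fun x => c x * x a).Finite :=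
  (hc a).subset fun _ hx => ⟨left_ne_zero_of_mul hx, right_ne_zero_of_mul hx⟩

theorem exists_finset_sum_eq_finsum [NonUnitalNonAssocSemiring F] {Y : Set (A → F)}
    (hY : Thin Y) (α : (A → F) → F) (I : Finset A) :
    ∃ T : Finset (A → F), ↑T ⊆ Y ∧
      ∀ a ∈ I, ∑ y ∈ T, α y * y a = ∑ᶠ y ∈ Y, α y * y a := by
  have hfin : {y ∈ Y | ∃ a ∈ I, y a ≠ 0}.Finite :=
    (I.finite_toSet.biUnion fun a _ => hY a).subset fun y ⟨hy, a, ha, hya⟩ =>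
      Set.mem_biUnion ha ⟨hy, hya⟩
  refine ⟨hfin.toFinset, fun y hy => (hfin.mem_toFinset.mp hy).1, fun a ha => ?_⟩
  rw [← finsum_mem_coe_finset]
  refine finsum_mem_inter_support_eq _ _ _ (Set.ext fun y => ?_)
  simp only [Set.mem_inter_iff, Finset.mem_coe, hfin.mem_toFinset, Set.mem_ofPred_eq,
    mem_support]
  exact ⟨fun h => ⟨h.1.1, h.2⟩, fun h => ⟨⟨h.1, a, ha, right_ne_zero_of_mul h.2⟩, h.2⟩⟩

end Thin

section Field

variable [Field F]

theorem mem_thinSpan_iff {X : Set (A → F)} {f : A → F} :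
    f ∈ thinSpan X ↔ ∃ c : (A → F) → F, support c ⊆ X ∧ Thin (support c) ∧
      f = fun a => ∑ᶠ x, c x * x a := by
  constructor
  · rintro ⟨X', α, hX'X, hX', rfl⟩
    refine ⟨X'.indicator α, Set.support_indicator_subset.trans hX'X,
      hX'.mono Set.support_indicator_subset, funext fun a => ?_⟩
    simp only [finsum_mem_def, Set.indicator_mul_left]
  · rintro ⟨c, hcX, hc, rfl⟩
    refine ⟨support c, c, hcX, hc, funext fun a => ?_⟩
    simp only [finsum_mem_def, Set.indicator_mul_left, Set.indicator_support]

def thinSpanSubmodule (X : Set (A → F)) : Submodule F (A → F) where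
  carrier := thinSpan X
  zero_mem' := ⟨∅, 0, Set.empty_subset X, fun _ => by simp, by ext; simp⟩
  add_mem' := by
    rintro _ _ hf hg
    obtain ⟨c, hcX, hc, rfl⟩ := mem_thinSpan_iff.mp hf
    obtain ⟨d, hdX, hd, rfl⟩ := mem_thinSpan_iff.mp hg
    refine mem_thinSpan_iff.mpr ⟨c + d, (support_add c d).trans (Set.union_subset hcX hdX),
      (hc.union hd).mono (support_add c d), funext fun a => ?_⟩
    simp only [Pi.add_apply, add_mul]
    exact (finsum_add_distrib (hc.finite_support_mul_apply a)
      (hd.finite_support_mul_apply a)).symm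
  smul_mem' := by
    rintro r _ hf
    obtain ⟨c, hcX, hc, rfl⟩ := mem_thinSpan_iff.mp hf
    refine mem_thinSpan_iff.mpr ⟨r • c, (support_const_smul_subset r c).trans hcX,
      hc.mono (support_const_smul_subset r c), funext fun a => ?_⟩
    simp only [Pi.smul_apply, smul_eq_mul, mul_finsum, mul_assoc]

end Field

theorem thinSpan_thinSpan_subset_closure_general [Field F] [TopologicalSpace F]
    (X : Set (A → F)) :
    thinSpan (thinSpan X) ⊆ closure (thinSpan X) := by
  rintro _ ⟨Y, α, hYX, hY, rfl⟩
  refine mem_closure_pi_of_forall_finset fun I => ?_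
  obtain ⟨T, hTY, hT⟩ := hY.exists_finset_sum_eq_finsum α I
  have hmem : ∑ y ∈ T, α y • y ∈ thinSpan X :=
    (thinSpanSubmodule X).sum_mem fun y hy => Submodule.smul_mem _ _ (hYX (hTY hy))
  refine ⟨fun a => ∑ y ∈ T, α y * y a, ?_, hT⟩
  simpa only [Finset.sum_fn, Pi.smul_def, smul_eq_mul] using hmem

/-- For any set `X` of functions `A → F`, the double thin span is contained in the
topological closure of the thin span, in the product topology with `F` discrete. -/
theorem thinSpan_thinSpan_subset_closure [Field F] [TopologicalSpace F] [DiscreteTopology F]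
    (X : Set (A → F)) :
    thinSpan (thinSpan X) ⊆ closure (thinSpan X) :=
  thinSpan_thinSpan_subset_closure_general X
end

section
/- Let F be a field, A a set, and E a thin set of functions A → F. For every thinly independent set I ⊆ X ⊆ E there exists a thinly independent set B with I ⊆ B ⊆ X and X ⊆ ⟨B⟩. -/
variable {A F : Type*}

/-- Thin independence: no nontrivial thin linear combination vanishes. -/
def ThinIndep [Field F] (Y : Set (A → F)) : Prop :=
  ∀ X : Set (A → F), X ⊆ Y → Thin X → ∀ α : (A → F) → F,
    (fun a => ∑ᶠ x ∈ X, α x * x a) = 0 → ∀ x ∈ X, α x = 0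


/-! Work in `V = X →₀ F`. Each `a : A` gives the vector `coordVec a = (x a)_{x ∈ X}` of `V`,
finitely supported because `X` is thin, and coefficients `β : X → F` are the same thing as linear
forms on `V`, the thin combination `∑ β x * x a` being the value of the form at `coordVec a`.
With `W` the span of the coordinate vectors, `Y ⊆ X` is therefore thinly independent iff the
vectors supported outside `Y` together with `W` span `V`, and `Y` thinly spans `X` as soon as the
vectors supported outside `Y` meet `W` trivially. So, starting from `I`, choose a set `C` of basis
vectors outside `I` spanning a complement of `W`; then `B = X \ C` works. -/

theorem Finsupp.linearCombination_map_single {ι R M : Type*} [CommSemiring R]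
    [AddCommMonoid M] [Module R M] (φ : (ι →₀ R) →ₗ[R] M) :
    linearCombination R (fun i => φ (single i 1)) = φ :=
  lhom_ext fun i r => by simp [← map_smul]

theorem Set.indicator_extend_subtype_val {α M : Type*} [Zero M] {X Y : Set α} {β : X → M}
    (hβ : ∀ z : X, (z : α) ∉ Y → β z = 0) (z : X) :
    Y.indicator (Function.extend Subtype.val β 0) z = β z := by
  by_cases hz : (z : α) ∈ Y
  · rw [indicator_of_mem hz, Subtype.val_injective.extend_apply]
  · rw [indicator_of_notMem hz, hβ z hz]

theorem Submodule.exists_subset_isCompl_span_image {K V ι : Type*} [DivisionRing K]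
    [AddCommGroup V] [Module K V] {W : Submodule K V} {v : ι → V} {s : Set ι}
    (hs : span K (v '' s) ⊔ W = ⊤) : ∃ C ⊆ s, IsCompl (span K (v '' C)) W := by
  obtain ⟨C, hCs, -, hsC, hC⟩ :=
    exists_linearIndepOn_extension (v := W.mkQ ∘ v) (linearIndepOn_empty K _) s.empty_subset
  refine ⟨C, hCs, ?_, ?_⟩
  · have := range_ker_disjoint (f := W.mkQ) (v := v ∘ Subtype.val) hC
    rwa [Set.range_comp, Subtype.range_coe, ker_mkQ] at this
  · rw [codisjoint_iff, eq_top_iff, ← hs]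
    refine sup_le ?_ le_sup_right
    rw [sup_comm, ← comap_map_mkQ, span_le]
    rintro _ ⟨i, hi, rfl⟩
    rw [SetLike.mem_coe, mem_comap, map_span, ← Set.image_comp]
    exact hsC ⟨i, hi, rfl⟩

namespace Thin

theorem mono_s11 [Zero F] {X Y : Set (A → F)} (hX : Thin X) (hYX : Y ⊆ X) : Thin Y :=
  fun a => (hX a).subset fun _ hx => ⟨hYX hx.1, hx.2⟩

open Finsupp Submodule

variable [Field F] {X Y : Set (A → F)} (hX : Thin X)

noncomputable def coordVec (a : A) : X →₀ F :=
  ofSupportFinite (fun z => (z : A → F) a)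
    (((hX a).preimage Subtype.val_injective.injOn).subset fun z hz => ⟨z.2, hz⟩)

@[simp]
theorem coordVec_apply (a : A) (z : X) : hX.coordVec a z = (z : A → F) a := rfl

noncomputable def coordSpan : Submodule F (X →₀ F) := span F (Set.range hX.coordVec)

theorem finsum_mem_mul_eq_linearCombination (hYX : Y ⊆ X) {α : (A → F) → F} {β : X → F}
    (hβ : ∀ z : X, β z = Y.indicator α z) (a : A) :
    ∑ᶠ x ∈ Y, α x * x a = linearCombination F β (hX.coordVec a) := by
  have hsupp : Function.support (fun z : X => β z * (z : A → F) a) ⊆ (hX.coordVec a).support :=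
    fun z hz => by simpa using right_ne_zero_of_mul hz
  calc ∑ᶠ x ∈ Y, α x * x a = ∑ᶠ x ∈ X, Y.indicator (fun x => α x * x a) x := by
        rw [finsum_mem_def, finsum_mem_def, Set.indicator_indicator, Set.inter_eq_right.2 hYX]
    _ = ∑ᶠ z : X, β z * (z : A → F) a := by
        simp only [← finsum_set_coe_eq_finsum_mem, hβ, Set.indicator_mul_left]
    _ = _ := by
        rw [finsum_eq_sum_of_support_subset _ hsupp, linearCombination_apply, Finsupp.sum]
        exact Finset.sum_congr rfl fun z _ => by simp [mul_comm]

theorem thinIndep_iff_sup_eq_top (hYX : Y ⊆ X) :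
    ThinIndep Y ↔ supported F F {z : X | (z : A → F) ∉ Y} ⊔ hX.coordSpan = ⊤ := by
  constructor
  · intro hY
    by_contra hne
    obtain ⟨φ, hφ0, hφ⟩ :=
      exists_dual_map_eq_bot_of_lt_top (lt_top_iff_ne_top.2 hne) inferInstance
    rw [← LinearMap.le_ker_iff_map] at hφ
    set β : X → F := fun z => φ (single z 1)
    have hβY : ∀ z : X, (z : A → F) ∉ Y → β z = 0 := fun z hz =>
      hφ (mem_sup_left (single_mem_supported F 1 hz))
    have hcomb : ∀ a, ∑ᶠ x ∈ Y, Function.extend Subtype.val β 0 x * x a = 0 := fun a => by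
      rw [hX.finsum_mem_mul_eq_linearCombination hYX
          (fun z => (Set.indicator_extend_subtype_val hβY z).symm),
        linearCombination_map_single]
      exact hφ (mem_sup_right (subset_span ⟨a, rfl⟩))
    have hβ : β = 0 := funext fun z => by
      by_cases hz : (z : A → F) ∈ Y
      · rw [← Subtype.val_injective.extend_apply β 0 z]
        exact hY Y subset_rfl (hX.mono_s11 hYX) _ (funext hcomb) z hz
      · exact hβY z hz
    apply hφ0
    rw [← linearCombination_map_single φ]
    exact (congrArg (linearCombination F) hβ).trans (linearCombination_zero X F F)
  · intro htop Y' hY'Y hY' α hα x hx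
    set φ := linearCombination F (fun z : X => Y'.indicator α z)
    have hφ : supported F F {z : X | (z : A → F) ∉ Y} ⊔ hX.coordSpan ≤ LinearMap.ker φ := by
      refine sup_le ?_ (span_le.2 ?_)
      · rw [supported_eq_span_single, span_le]
        rintro _ ⟨z, hz, rfl⟩
        simp [φ, Set.indicator_of_notMem fun h => hz (hY'Y h)]
      · rintro _ ⟨a, rfl⟩
        rw [SetLike.mem_coe, LinearMap.mem_ker,
          ← hX.finsum_mem_mul_eq_linearCombination (hY'Y.trans hYX) (fun _ => rfl)]
        exact congrFun hα a
    have := hφ (htop.symm ▸ mem_top : single ⟨x, hYX (hY'Y hx)⟩ (1 : F) ∈ _)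
    simpa [φ, Set.indicator_of_mem hx] using this

theorem subset_thinSpan_of_disjoint (hYX : Y ⊆ X)
    (h : Disjoint (supported F F {z : X | (z : A → F) ∉ Y}) hX.coordSpan) :
    X ⊆ thinSpan Y := by
  intro x hx
  obtain ⟨W, hW, hWcompl⟩ := h.symm.exists_isCompl
  set φ := lapply ⟨x, hx⟩ ∘ₗ W.projection _ hWcompl
  set β : X → F := fun z => φ (single z 1)
  have hβY : ∀ z : X, (z : A → F) ∉ Y → β z = 0 := fun z hz => by
    simp [β, φ, projection_apply_of_mem_right hWcompl (single_mem_supported F 1 hz)]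
  refine ⟨Y, Function.extend Subtype.val β 0, subset_rfl, hX.mono_s11 hYX, funext fun a => ?_⟩
  rw [hX.finsum_mem_mul_eq_linearCombination hYX
      (fun z => (Set.indicator_extend_subtype_val hβY z).symm),
    linearCombination_map_single]
  have ha : hX.coordVec a ∈ W := hW (subset_span ⟨a, rfl⟩)
  simp [φ, projection_apply_of_mem_left hWcompl ha]

end Thin

/-- For `E` thin and any thinly independent `I ⊆ X ⊆ E`, there is a thinly independent
set `B` with `I ⊆ B ⊆ X` and `X ⊆ ⟨B⟩`. -/
theorem exists_thin_basis_between [Field F] (E X I : Set (A → F)) (hE : Thin E)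
    (hIX : I ⊆ X) (hXE : X ⊆ E) (hI : ThinIndep I) :
    ∃ B : Set (A → F), ThinIndep B ∧ I ⊆ B ∧ B ⊆ X ∧ X ⊆ thinSpan B := by
  have hX : Thin X := hE.mono_s11 hXE
  have hspan := (hX.thinIndep_iff_sup_eq_top hIX).1 hI
  rw [Finsupp.supported_eq_span_single] at hspan
  obtain ⟨C, hCI, hC⟩ := Submodule.exists_subset_isCompl_span_image hspan
  rw [← Finsupp.supported_eq_span_single] at hC
  have hBX : Subtype.val '' Cᶜ ⊆ X := Subtype.coe_image_subset X Cᶜ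
  have hBC : {z : X | (z : A → F) ∉ Subtype.val '' Cᶜ} = C := by
    ext z
    simp [Subtype.val_injective.mem_set_image]
  refine ⟨Subtype.val '' Cᶜ, (hX.thinIndep_iff_sup_eq_top hBX).2 ?_,
    fun x hx => ⟨⟨x, hIX hx⟩, fun hxC => hCI hxC hx, rfl⟩, hBX,
    hX.subset_thinSpan_of_disjoint hBX ?_⟩
  · rw [hBC]
    exact hC.codisjoint.eq_top
  · rw [hBC]
    exact hC.disjoint
end

section
/- Let G be a graph and map each edge e = uv of G to the function V(G) → 𝔽₂ that is 1 exactly on u and v (and 0 elsewhere, with loops mapping to the zero function). A set F of edges is thinly independent (as a set of V(G) → 𝔽₂ functions) if and only if F contains no elementary algebraic cycle of G, i.e., F contains neither the edge set of a finite cycle nor the edge set of a double ray. -/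
variable {V : Type*} [DecidableEq V]

/-- The function `V → 𝔽₂` representing an edge: `1` exactly on its endvertices. -/
def edgeFun (e : Sym2 V) : V → ZMod 2 :=
  fun v => if v ∈ e then 1 else 0

/-- A set `F` of edges, viewed as a set of `V → 𝔽₂` functions, is thinly independent:
for every subset `X ⊆ F` such that every vertex lies in only finitely many edges of `X`,
the pointwise sum of the corresponding functions vanishes only if `X = ∅`. -/
def ThinIndepEdges (F : Set (Sym2 V)) : Prop :=
  ∀ X : Set (Sym2 V), X ⊆ F → (∀ v : V, {e ∈ X | v ∈ e}.Finite) →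
    (fun v => ∑ᶠ e ∈ X, edgeFun e v) = (0 : V → ZMod 2) → X = ∅

/-- The edge set of a finite cycle of `G`. -/
def IsFiniteCycleEdgeSet (G : SimpleGraph V) (C : Set (Sym2 V)) : Prop :=
  ∃ (v : V) (w : G.Walk v v), w.IsCycle ∧ C = {e | e ∈ w.edges}

/-- The edge set of a double ray (2-way infinite path) of `G`. -/
def IsDoubleRayEdgeSet (G : SimpleGraph V) (C : Set (Sym2 V)) : Prop :=
  ∃ f : ℤ → V, Function.Injective f ∧ (∀ i : ℤ, G.Adj (f i) (f (i + 1))) ∧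
    C = {e | ∃ i : ℤ, e = s(f i, f (i + 1))}

/-- An elementary algebraic cycle of `G`: the edge set of a finite cycle or of a double ray. -/
def IsElemAlgCycle (G : SimpleGraph V) (C : Set (Sym2 V)) : Prop :=
  IsFiniteCycleEdgeSet G C ∨ IsDoubleRayEdgeSet G C

/-!
Summing the edge functions of a locally finite edge set `X` gives, at each vertex, the parity of
its degree in `X`; so `F` is thinly independent iff it contains no nonempty locally finite edge set
with all degrees even. Cycles and double rays are such sets. Conversely, in such a set no vertex
has degree one, so any edge of it extends in both directions to a two-way infinite walk in `X`
that never immediately backtracks. If the edges of `X` form a forest, this walk is a double ray;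
otherwise `X` contains a cycle.
-/

variable {α : Type*}

def HasFiniteEvenDegree (X : Set (Sym2 α)) (v : α) : Prop :=
  {e ∈ X | v ∈ e}.Finite ∧ Even {e ∈ X | v ∈ e}.ncard

theorem finsum_mem_edgeFun {X : Set (Sym2 V)} {v : V} (hX : {e ∈ X | v ∈ e}.Finite) :
    ∑ᶠ e ∈ X, edgeFun e v = ({e ∈ X | v ∈ e}.ncard : ZMod 2) := by
  have hsupp : Function.support (fun e : Sym2 V => edgeFun e v) = {e | v ∈ e} := by
    ext e; by_cases h : v ∈ e <;> simp [edgeFun, h]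
  rw [← finsum_one, Nat.cast_finsum_mem hX, ← finsum_mem_inter_support, hsupp]
  exact finsum_mem_congr rfl fun e he => by simp [edgeFun, he.2]

theorem thinIndepEdges_iff (F : Set (Sym2 V)) :
    ThinIndepEdges F ↔ ∀ X ⊆ F, (∀ v, HasFiniteEvenDegree X v) → X = ∅ := by
  simp only [HasFiniteEvenDegree, forall_and, and_imp]
  refine forall₂_congr fun X _ => forall_congr' fun hX => ?_
  simp only [funext_iff, finsum_mem_edgeFun (hX _), Pi.zero_apply,
    ZMod.natCast_eq_zero_iff_even]

theorem SimpleGraph.Walk.IsCycle.hasFiniteEvenDegree {G : SimpleGraph α} {u : α}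
    {c : G.Walk u u} (hc : c.IsCycle) (v : α) : HasFiniteEvenDegree {e | e ∈ c.edges} v := by
  classical
  have hinc : {e ∈ {e | e ∈ c.edges} | v ∈ e} = ↑(c.edges.filter (v ∈ ·)).toFinset := by
    ext; simp
  rw [HasFiniteEvenDegree, hinc, Set.ncard_coe_finset,
    List.toFinset_card_of_nodup (hc.edges_nodup.filter _), ← List.countP_eq_length_filter]
  exact ⟨Finset.finite_toSet _, (hc.isTrail.even_countP_edges_iff v).2 fun h => (h rfl).elim⟩

theorem incidence_int_seq_eq_pair {f : ℤ → α} (hf : f.Injective) (j : ℤ) :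
    {e ∈ {e | ∃ i, e = s(f i, f (i + 1))} | f j ∈ e} =
      {s(f (j - 1), f j), s(f j, f (j + 1))} := by
  ext e
  constructor
  · rintro ⟨⟨i, rfl⟩, hj⟩
    rcases Sym2.mem_iff.1 hj with h | h
    · exact Or.inr (by rw [hf h]; rfl)
    · exact Or.inl (by rw [hf h, add_sub_cancel_right])
  · rintro (rfl | rfl)
    · exact ⟨⟨j - 1, by rw [sub_add_cancel]⟩, Sym2.mem_mk_right _ _⟩
    · exact ⟨⟨j, rfl⟩, Sym2.mem_mk_left _ _⟩

theorem hasFiniteEvenDegree_int_seq {f : ℤ → α} (hf : f.Injective) (v : α) :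
    HasFiniteEvenDegree {e | ∃ i, e = s(f i, f (i + 1))} v := by
  by_cases hv : v ∈ Set.range f
  · obtain ⟨j, rfl⟩ := hv
    have hne : s(f (j - 1), f j) ≠ s(f j, f (j + 1)) := fun h => by
      rcases Sym2.eq_iff.1 h with ⟨h, -⟩ | ⟨h, -⟩ <;> have := hf h <;> omega
    rw [HasFiniteEvenDegree, incidence_int_seq_eq_pair hf, Set.ncard_pair hne]
    exact ⟨Set.toFinite _, even_two⟩
  · have hinc : {e ∈ {e | ∃ i, e = s(f i, f (i + 1))} | v ∈ e} = ∅ := by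
      refine Set.eq_empty_of_forall_notMem ?_
      rintro _ ⟨⟨i, rfl⟩, hvi⟩
      rcases Sym2.mem_iff.1 hvi with rfl | rfl
      exacts [hv ⟨i, rfl⟩, hv ⟨i + 1, rfl⟩]
    rw [HasFiniteEvenDegree, hinc, Set.ncard_empty]
    exact ⟨Set.finite_empty, Even.zero⟩

theorem IsElemAlgCycle.nonempty {G : SimpleGraph α} {C : Set (Sym2 α)}
    (hC : IsElemAlgCycle G C) : C.Nonempty := by
  rcases hC with ⟨v, c, hc, rfl⟩ | ⟨f, -, -, rfl⟩
  · exact List.exists_mem_of_ne_nil _ fun h => hc.not_nil (SimpleGraph.Walk.edges_eq_nil.1 h)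
  · exact ⟨_, 0, rfl⟩

theorem IsElemAlgCycle.hasFiniteEvenDegree {G : SimpleGraph α} {C : Set (Sym2 α)}
    (hC : IsElemAlgCycle G C) (v : α) : HasFiniteEvenDegree C v := by
  rcases hC with ⟨u, c, hc, rfl⟩ | ⟨f, hf, -, rfl⟩
  · exact hc.hasFiniteEvenDegree v
  · exact hasFiniteEvenDegree_int_seq hf v

theorem Set.exists_ne_of_even_ncard {s : Set α} {a : α} (ha : a ∈ s) (hs : Even s.ncard) :
    ∃ b ∈ s, b ≠ a := by
  by_contra! h
  rw [Set.eq_singleton_iff_unique_mem.2 ⟨ha, h⟩, Set.ncard_singleton] at hs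
  exact Nat.not_even_one hs

theorem Sym2.exists_mk_mem_ne_of_even_ncard {X : Set (Sym2 α)} {u v : α} (huv : s(u, v) ∈ X)
    (hv : Even {e ∈ X | v ∈ e}.ncard) : ∃ w, s(v, w) ∈ X ∧ w ≠ u := by
  obtain ⟨e, ⟨heX, hve⟩, hne⟩ :=
    Set.exists_ne_of_even_ncard
      (show s(u, v) ∈ {e ∈ X | v ∈ e} from ⟨huv, Sym2.mem_mk_right u v⟩) hv
  obtain ⟨w, rfl⟩ := Sym2.mem_iff_exists.1 hve
  exact ⟨w, heX, by rintro rfl; exact hne Sym2.eq_swap⟩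

-- The negative half is a forward chain from `σ a₀`, reversed by `σ`.
theorem exists_int_chain {r : α → α → Prop} (σ : α → α) (hσ : Function.Involutive σ)
    (hr : ∀ a b, r a b → r (σ b) (σ a)) (hnext : ∀ a, ∃ b, r a b) (a₀ : α) :
    ∃ D : ℤ → α, D 0 = a₀ ∧ ∀ i, r (D i) (D (i + 1)) := by
  choose next hnext using hnext
  refine ⟨fun | .ofNat n => next^[n] a₀ | .negSucc n => σ (next^[n + 1] (σ a₀)), rfl, ?_⟩
  rintro (n | _ | n)
  · show r (next^[n] a₀) (next^[n + 1] a₀)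
    rw [Function.iterate_succ_apply']
    exact hnext _
  · show r (σ (next (σ a₀))) a₀
    simpa only [hσ a₀] using hr _ _ (hnext (σ a₀))
  · show r (σ (next^[n + 2] (σ a₀))) (σ (next^[n + 1] (σ a₀)))
    rw [Function.iterate_succ_apply' _ (n + 1)]
    exact hr _ _ (hnext _)

namespace SimpleGraph

variable {G : SimpleGraph α}

theorem exists_nonbacktracking_int_seq (hG : ∀ u v, G.Adj u v → ∃ w, G.Adj v w ∧ w ≠ u)
    {a b : α} (hab : G.Adj a b) :
    ∃ f : ℤ → α, (∀ i, G.Adj (f i) (f (i + 1))) ∧ ∀ i, f i ≠ f (i + 2) := by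
  obtain ⟨D, -, hD⟩ :=
    exists_int_chain (r := fun d d' : G.Dart => d.snd = d'.fst ∧ d.fst ≠ d'.snd)
      Dart.symm Dart.symm_involutive (fun _ _ h => ⟨h.1.symm, h.2.symm⟩)
      (fun d => by
        obtain ⟨w, hw, hwu⟩ := hG _ _ d.adj
        exact ⟨⟨(d.snd, w), hw⟩, rfl, hwu.symm⟩)
      ⟨(a, b), hab⟩
  refine ⟨fun i => (D i).fst, fun i => ?_, fun i => ?_⟩
  · show G.Adj (D i).fst (D (i + 1)).fst
    exact (hD i).1 ▸ (D i).adj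
  · show (D i).fst ≠ (D (i + 2)).fst
    rw [show i + 2 = i + 1 + 1 by ring, ← (hD (i + 1)).1]
    exact (hD i).2

def seqWalk (g : ℕ → α) (hg : ∀ k, G.Adj (g k) (g (k + 1))) :
    (n : ℕ) → G.Walk (g 0) (g n)
  | 0 => .nil
  | n + 1 => (seqWalk g hg n).concat (hg n)

theorem length_seqWalk (g : ℕ → α) (hg : ∀ k, G.Adj (g k) (g (k + 1))) (n : ℕ) :
    (seqWalk g hg n).length = n := by
  induction n with
  | zero => rfl
  | succ n ih => rw [seqWalk, Walk.length_concat, ih]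

theorem edges_seqWalk (g : ℕ → α) (hg : ∀ k, G.Adj (g k) (g (k + 1))) (n : ℕ) :
    (seqWalk g hg n).edges = (List.range n).map fun k => s(g k, g (k + 1)) := by
  induction n with
  | zero => rfl
  | succ n ih =>
    rw [seqWalk, Walk.edges_concat, ih, List.range_succ, List.map_append, List.concat_eq_append]
    rfl

theorem IsAcyclic.isPath_seqWalk (hG : G.IsAcyclic) (g : ℕ → α)
    (hg : ∀ k, G.Adj (g k) (g (k + 1))) (hback : ∀ k, g k ≠ g (k + 2)) (n : ℕ) :
    (seqWalk g hg n).IsPath := by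
  rw [hG.isPath_iff_isChain, edges_seqWalk, List.isChain_map, List.isChain_range]
  intro k _ h
  rcases Sym2.eq_iff.1 h with ⟨h, -⟩ | ⟨h, -⟩
  · exact (hg k).ne h
  · exact hback k h

theorem IsAcyclic.injective_of_nonbacktracking (hG : G.IsAcyclic) {f : ℤ → α}
    (hf : ∀ i, G.Adj (f i) (f (i + 1))) (hback : ∀ i, f i ≠ f (i + 2)) : f.Injective := by
  suffices ∀ i j, i < j → f i ≠ f j from
    fun i j hij => by_contra fun hne => (lt_or_gt_of_ne hne).elim
      (fun h => this i j h hij) (fun h => this j i h hij.symm)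
  intro i j hij
  obtain ⟨n, rfl⟩ : ∃ n : ℕ, j = i + (n + 1 : ℕ) := ⟨(j - i - 1).toNat, by omega⟩
  have hg : ∀ k : ℕ, G.Adj (f (i + k)) (f (i + (k + 1 : ℕ))) := fun k => by
    simpa [add_assoc] using hf (i + k)
  have hpath := hG.isPath_seqWalk _ hg (fun k => by simpa [add_assoc] using hback (i + k)) (n + 1)
  intro hn
  have := (hpath.getVert_eq_end_iff (Nat.zero_le _)).1 (by simpa using hn)
  simp [length_seqWalk] at this

end SimpleGraph

open SimpleGraph in
theorem exists_elemAlgCycle_subset {G : SimpleGraph α} {X : Set (Sym2 α)} (hX : X ⊆ G.edgeSet)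
    (hne : X.Nonempty) (hdead : ∀ u v, s(u, v) ∈ X → ∃ w, s(v, w) ∈ X ∧ w ≠ u) :
    ∃ C ⊆ X, IsElemAlgCycle G C := by
  set H := fromEdgeSet X
  have hHG : H ≤ G := (fromEdgeSet_le G).2 (Set.sdiff_subset.trans hX)
  have hadj {u v : α} : H.Adj u v ↔ s(u, v) ∈ X :=
    ⟨fun h => ((fromEdgeSet_adj X).1 h).1,
      fun h => (fromEdgeSet_adj X).2 ⟨h, G.ne_of_adj (hX h)⟩⟩
  by_cases hH : H.IsAcyclic
  · obtain ⟨⟨a, b⟩, hab⟩ := hne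
    obtain ⟨f, hf, hback⟩ := exists_nonbacktracking_int_seq
      (fun u v huv => (hdead u v (hadj.1 huv)).imp fun w hw => ⟨hadj.2 hw.1, hw.2⟩) (hadj.2 hab)
    refine ⟨_, ?_,
      Or.inr ⟨f, hH.injective_of_nonbacktracking hf hback, fun i => hHG (hf i), rfl⟩⟩
    rintro _ ⟨i, rfl⟩
    exact hadj.1 (hf i)
  · obtain ⟨v, c, hc⟩ : ∃ v, ∃ c : H.Walk v v, c.IsCycle := by simpa [IsAcyclic] using hH
    refine ⟨_, fun e he => ?_, Or.inl ⟨v, c.mapLe hHG, hc.mapLe hHG, rfl⟩⟩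
    have := c.edges_subset_edgeSet (Walk.edges_mapLe_eq_edges hHG c ▸ he)
    rw [edgeSet_fromEdgeSet] at this
    exact this.1

/-- A set `F` of edges of `G` is thinly independent over `𝔽₂` (each edge represented by the
indicator function of its endvertices) if and only if `F` contains no elementary algebraic
cycle of `G`. -/
theorem thinIndep_iff_no_elemAlgCycle (G : SimpleGraph V) (F : Set (Sym2 V))
    (hF : F ⊆ G.edgeSet) :
    ThinIndepEdges F ↔ ¬ ∃ C : Set (Sym2 V), C ⊆ F ∧ IsElemAlgCycle G C := by
  rw [thinIndepEdges_iff]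
  constructor
  · rintro hindep ⟨C, hCF, hC⟩
    exact hC.nonempty.ne_empty (hindep C hCF hC.hasFiniteEvenDegree)
  · intro hnone X hXF hX
    by_contra hXne
    obtain ⟨C, hCX, hC⟩ := exists_elemAlgCycle_subset (hXF.trans hF)
      (Set.nonempty_iff_ne_empty.2 hXne) fun u v huv =>
        Sym2.exists_mk_mem_ne_of_even_ncard huv (hX v).2
    exact hnone ⟨C, hCX.trans hXF, hC⟩
end

section
/- Let G be a graph whose elementary algebraic cycles form the circuits of a matroid M on E(G). Then every non-empty cut of G one of whose sides induces a rayless subgraph contains a cocircuit of M. -/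
variable {V : Type*}

/-- The subgraph of `G` induced on `A` is rayless: it contains no one-way infinite path. -/
def RaylessIn (G : SimpleGraph V) (A : Set V) : Prop :=
  ¬ ∃ f : ℕ → V, Function.Injective f ∧ (∀ n : ℕ, f n ∈ A) ∧
      ∀ n : ℕ, G.Adj (f n) (f (n + 1))

/-! The cut contains a cocircuit unless some base `B` of `M` avoids it. In that case, for an edge
`e` of the cut, the fundamental circuit of `e` with respect to `B` is an elementary algebraic cycle
meeting the cut only in `e`. That is impossible: a finite cycle crosses every cut an even number of
times, and a double ray crossing the cut exactly once has one of its two tails, a ray, inside the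
rayless side. -/

open Set

lemma matroidCircuit_iff_isCircuit {α : Type*} {M : Matroid α} {C : Set α} :
    MatroidCircuit M C ↔ M.IsCircuit C := by
  rw [Matroid.isCircuit_iff_forall_ssubset, Matroid.dep_iff, MatroidCircuit]
  tauto

namespace Matroid

variable {α : Type*} {M : Matroid α} {X : Set α}

lemma exists_isCocircuit_subset_of_forall_isCircuit_inter_ne_singleton (hXE : X ⊆ M.E)
    (hX : X.Nonempty) (h : ∀ C e, M.IsCircuit C → C ∩ X ≠ {e}) :
    ∃ K ⊆ X, M.IsCocircuit K := by
  suffices hdep : M✶.Dep X from hdep.exists_isCircuit_subset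
  rw [← not_indep_iff (M := M✶) hXE, ← coindep_def, coindep_iff_compl_spanning hXE]
  intro hsp
  obtain ⟨B, hB, hBX⟩ := hsp.exists_isBase_subset
  obtain ⟨e, heX⟩ := hX
  have heB : e ∉ B := fun heB ↦ (hBX heB).2 heX
  refine h _ e (hB.fundCircuit_isCircuit (hXE heX) heB) <| subset_antisymm
    (fun x ⟨hxC, hxX⟩ ↦ ?_) (singleton_subset_iff.2 ⟨M.mem_fundCircuit e B, heX⟩)
  rcases M.fundCircuit_subset_insert e B hxC with rfl | hxB
  · rfl
  · exact absurd hxX (hBX hxB).2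

end Matroid

section Cut

variable {G : SimpleGraph V} {A : Set V}

lemma mem_cutEdges_iff {u v : V} (h : G.Adj u v) :
    s(u, v) ∈ cutEdges G A ↔ ¬(u ∈ A ↔ v ∈ A) := by
  refine ⟨?_, fun huv ↦ ?_⟩
  · rintro ⟨-, a, b, hab, ha, hb⟩
    rcases Sym2.eq_iff.1 hab with ⟨rfl, rfl⟩ | ⟨rfl, rfl⟩ <;> tauto
  · by_cases hu : u ∈ A
    · exact ⟨h, u, v, rfl, hu, by tauto⟩
    · exact ⟨h, v, u, Sym2.eq_swap, by tauto, hu⟩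

open Classical in
lemma SimpleGraph.Walk.even_countP_mem_cutEdges_iff {x y : V} (p : G.Walk x y) :
    Even (p.edges.countP (· ∈ cutEdges G A)) ↔ (x ∈ A ↔ y ∈ A) := by
  induction p with
  | nil => simp
  | cons h q ih =>
    simp only [edges_cons, List.countP_cons, decide_eq_true_eq, mem_cutEdges_iff h]
    split_ifs <;> simp only [Nat.even_add_one, add_zero, ih] <;> tauto

lemma SimpleGraph.Walk.IsTrail.edgeSet_inter_cutEdges_ne_singleton {x : V} {w : G.Walk x x}
    (hw : w.IsTrail) (e : Sym2 V) : {d | d ∈ w.edges} ∩ cutEdges G A ≠ {e} := by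
  classical
  intro hCe
  have hcut : ∀ d ∈ w.edges, d ∈ cutEdges G A ↔ d = e := fun d hd ↦ by
    rw [← mem_singleton_iff, ← hCe]
    exact ⟨fun h ↦ ⟨hd, h⟩, And.right⟩
  have hcount : w.edges.countP (· ∈ cutEdges G A) = 1 := by
    have he : e ∈ w.edges := (hCe.symm.subset (mem_singleton e)).1
    rw [← List.count_eq_one_of_mem hw.edges_nodup he, List.count_eq_countP]
    exact List.countP_congr fun d hd ↦ by simpa using hcut d hd
  simpa [hcount] using w.even_countP_mem_cutEdges_iff (A := A)

section DoubleRay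

variable {f : ℤ → V}

lemma RaylessIn.not_forall_ge_mem (hray : RaylessIn G A) (hf : Function.Injective f)
    (hadj : ∀ i, G.Adj (f i) (f (i + 1))) (k : ℤ) : ¬ ∀ j, k ≤ j → f j ∈ A := fun hA ↦
  hray ⟨fun n ↦ f (k + n), fun m n hmn ↦ by simpa using hf hmn, fun n ↦ hA _ (by omega),
    fun n ↦ by simpa [add_assoc] using hadj (k + n)⟩

lemma RaylessIn.not_forall_le_mem (hray : RaylessIn G A) (hf : Function.Injective f)
    (hadj : ∀ i, G.Adj (f i) (f (i + 1))) (k : ℤ) : ¬ ∀ j, j ≤ k → f j ∈ A := fun hA ↦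
  hray.not_forall_ge_mem (f := fun i ↦ f (-i)) (hf.comp neg_injective)
    (fun i ↦ by simpa [neg_add_eq_sub] using (hadj (-i - 1)).symm) (-k)
    fun j hj ↦ hA _ (by omega)

lemma IsDoubleRayEdgeSet.inter_cutEdges_ne_singleton {C : Set (Sym2 V)}
    (hC : IsDoubleRayEdgeSet G C) (hray : RaylessIn G A) (e : Sym2 V) :
    C ∩ cutEdges G A ≠ {e} := by
  obtain ⟨f, hf, hadj, rfl⟩ := hC
  intro hCe
  obtain ⟨⟨i₀, rfl⟩, he⟩ := hCe.symm.subset (mem_singleton e)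
  have hstep : ∀ j ≠ i₀, (f j ∈ A ↔ f (j + 1) ∈ A) := fun j hj ↦ by
    rw [← not_not (a := _ ↔ _), ← mem_cutEdges_iff (hadj j)]
    intro hjA
    have : s(f j, f (j + 1)) = s(f i₀, f (i₀ + 1)) := hCe.subset ⟨⟨j, rfl⟩, hjA⟩
    rcases Sym2.eq_iff.1 this with ⟨h, -⟩ | ⟨h₁, h₂⟩
    · exact hj (hf h)
    · have := hf h₁; have := hf h₂; omega
  have hup : ∀ j, i₀ + 1 ≤ j → (f j ∈ A ↔ f (i₀ + 1) ∈ A) := by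
    intro j hj
    induction j, hj using Int.leInduction with
    | base => rfl
    | succ j hj ih => rw [← hstep j (by omega), ih]
  have hdown : ∀ j, j ≤ i₀ → (f j ∈ A ↔ f i₀ ∈ A) := by
    intro j hj
    induction j, hj using Int.leInductionDown with
    | base => rfl
    | pred j hj ih => rw [hstep (j - 1) (by omega), sub_add_cancel, ih]
  rw [mem_cutEdges_iff (hadj i₀)] at he
  by_cases hA : f i₀ ∈ A
  · exact hray.not_forall_le_mem hf hadj i₀ fun j hj ↦ (hdown j hj).2 hA
  · exact hray.not_forall_ge_mem hf hadj (i₀ + 1) fun j hj ↦ (hup j hj).2 (by tauto)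

end DoubleRay

lemma IsElemAlgCycle.inter_cutEdges_ne_singleton {C : Set (Sym2 V)} (hC : IsElemAlgCycle G C)
    (hray : RaylessIn G A) (e : Sym2 V) : C ∩ cutEdges G A ≠ {e} := by
  rcases hC with ⟨x, w, hw, rfl⟩ | hC
  · exact hw.isTrail.edgeSet_inter_cutEdges_ne_singleton e
  · exact hC.inter_cutEdges_ne_singleton hray e

end Cut

/-- If the elementary algebraic cycles of `G` are the circuits of a matroid `M`, then every
non-empty cut of `G` one of whose sides induces a rayless subgraph contains a cocircuit
of `M` (a circuit of the dual matroid `M✶`). -/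
theorem rayless_side_cut_contains_cocircuit (G : SimpleGraph V) (M : Matroid (Sym2 V))
    (hE : M.E = G.edgeSet)
    (hcirc : ∀ C : Set (Sym2 V), MatroidCircuit M C ↔ IsElemAlgCycle G C)
    (A : Set V) (hne : (cutEdges G A).Nonempty) (hray : RaylessIn G A) :
    ∃ D : Set (Sym2 V), D ⊆ cutEdges G A ∧ MatroidCircuit M✶ D := by
  have hcut : cutEdges G A ⊆ M.E := hE ▸ fun _ he ↦ he.1
  obtain ⟨K, hKA, hK⟩ :=
    Matroid.exists_isCocircuit_subset_of_forall_isCircuit_inter_ne_singleton hcut hne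
      fun C e hC ↦
        ((hcirc C).1 (matroidCircuit_iff_isCircuit.2 hC)).inter_cutEdges_ne_singleton hray e
  exact ⟨K, hKA, matroidCircuit_iff_isCircuit.2 hK⟩
end

section
/- Let E be a set and 𝓒 ⊆ 2^E a collection satisfying the circuit axioms (C1)–(C3) and (CM) of infinite matroids. If B is a maximal subset of E containing no member of 𝓒, and e ∈ E \ B, then B + e contains at most one member of 𝓒. -/
/-! Two circuits `C₁ ≠ C₂` of `B + e` both pass through `e`, since `B` is independent. Eliminating
`e` between them with (C3) for `X = {e}` leaves a circuit inside `(C₁ ∪ C₂) - e ⊆ B`,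
contradicting the independence of `B`. -/

open Set

variable {α : Type*}

/-- A set is `𝓒`-independent if it contains no member of `𝓒`. -/
def CIndep (𝓒 : Set (Set α)) (I : Set α) : Prop :=
  ¬ ∃ C ∈ 𝓒, C ⊆ I

/-- Axiom (C3) for the circuit family `𝓒`. -/
def SatisfiesCircuitElimination (𝓒 : Set (Set α)) : Prop :=
  ∀ C : Set α, C ∈ 𝓒 → ∀ X : Set α, X ⊆ C → ∀ Cfam : α → Set α,
    (∀ x ∈ X, Cfam x ∈ 𝓒) →
    (∀ x ∈ X, ∀ y ∈ X, (x ∈ Cfam y ↔ x = y)) →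
    ∀ z ∈ C \ ⋃ x ∈ X, Cfam x,
      ∃ C' ∈ 𝓒, z ∈ C' ∧ C' ⊆ (C ∪ ⋃ x ∈ X, Cfam x) \ X

theorem CIndep.mem_of_subset_insert {𝓒 : Set (Set α)} {B C : Set α} {e : α} (hB : CIndep 𝓒 B)
    (hC : C ∈ 𝓒) (hCB : C ⊆ insert e B) : e ∈ C := by
  by_contra heC
  exact hB ⟨C, hC, (subset_insert_iff_of_notMem heC).mp hCB⟩

theorem SatisfiesCircuitElimination.exists_subset_diff_singleton {𝓒 : Set (Set α)}
    (hC3 : SatisfiesCircuitElimination 𝓒) {C₁ C₂ : Set α} {e z : α}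
    (h₁ : C₁ ∈ 𝓒) (h₂ : C₂ ∈ 𝓒) (he₁ : e ∈ C₁) (he₂ : e ∈ C₂) (hz : z ∈ C₁ \ C₂) :
    ∃ C ∈ 𝓒, z ∈ C ∧ C ⊆ (C₁ ∪ C₂) \ {e} := by
  have hU : (⋃ x ∈ ({e} : Set α), C₂) = C₂ := biUnion_singleton e fun _ ↦ C₂
  have h := hC3 C₁ h₁ {e} (singleton_subset_iff.mpr he₁) (fun _ ↦ C₂)
    (fun _ _ ↦ h₂) (by rintro x rfl y rfl; simpa using he₂) z (by rwa [hU])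
  rwa [hU] at h

theorem CIndep.eq_of_subset_insert {𝓒 : Set (Set α)}
    (hC2 : ∀ C C' : Set α, C ∈ 𝓒 → C' ∈ 𝓒 → C ⊆ C' → C = C')
    (hC3 : SatisfiesCircuitElimination 𝓒) {B C₁ C₂ : Set α} {e : α} (hB : CIndep 𝓒 B)
    (h₁ : C₁ ∈ 𝓒) (h₂ : C₂ ∈ 𝓒) (hC₁ : C₁ ⊆ insert e B) (hC₂ : C₂ ⊆ insert e B) :
    C₁ = C₂ := by
  by_contra hne
  obtain ⟨z, hz⟩ := sdiff_nonempty.mpr fun hsub ↦ hne (hC2 _ _ h₁ h₂ hsub)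
  obtain ⟨C, hC, -, hCsub⟩ := hC3.exists_subset_diff_singleton h₁ h₂
    (hB.mem_of_subset_insert h₁ hC₁) (hB.mem_of_subset_insert h₂ hC₂) hz
  refine hB ⟨C, hC, hCsub.trans ?_⟩
  rw [sdiff_singleton_subset_iff]
  exact union_subset hC₁ hC₂

theorem at_most_one_circuit_in_base_plus_edge_general (𝓒 : Set (Set α))
    (hC2 : ∀ C C' : Set α, C ∈ 𝓒 → C' ∈ 𝓒 → C ⊆ C' → C = C')
    (hC3 : ∀ C : Set α, C ∈ 𝓒 → ∀ X : Set α, X ⊆ C → ∀ Cfam : α → Set α,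
      (∀ x ∈ X, Cfam x ∈ 𝓒) →
      (∀ x ∈ X, ∀ y ∈ X, (x ∈ Cfam y ↔ x = y)) →
      ∀ z ∈ C \ ⋃ x ∈ X, Cfam x,
        ∃ C' ∈ 𝓒, z ∈ C' ∧ C' ⊆ (C ∪ ⋃ x ∈ X, Cfam x) \ X)
    (B : Set α) (hB : Maximal (CIndep 𝓒) B) (e : α) :
    ∀ C₁ C₂ : Set α, C₁ ∈ 𝓒 → C₂ ∈ 𝓒 →
      C₁ ⊆ insert e B → C₂ ⊆ insert e B → C₁ = C₂ :=
  fun _ _ h₁ h₂ ↦ hB.prop.eq_of_subset_insert hC2 hC3 h₁ h₂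

/-- If `𝓒` satisfies the circuit axioms (C1), (C2), (C3) and (CM) of infinite matroids,
`B` is a maximal set containing no member of `𝓒`, and `e ∉ B`, then `B + e` contains
at most one member of `𝓒`. -/
theorem at_most_one_circuit_in_base_plus_edge (𝓒 : Set (Set α))
    (hC1 : ∅ ∉ 𝓒)
    (hC2 : ∀ C C' : Set α, C ∈ 𝓒 → C' ∈ 𝓒 → C ⊆ C' → C = C')
    (hC3 : ∀ C : Set α, C ∈ 𝓒 → ∀ X : Set α, X ⊆ C → ∀ Cfam : α → Set α,
      (∀ x ∈ X, Cfam x ∈ 𝓒) →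
      (∀ x ∈ X, ∀ y ∈ X, (x ∈ Cfam y ↔ x = y)) →
      ∀ z ∈ C \ ⋃ x ∈ X, Cfam x,
        ∃ C' ∈ 𝓒, z ∈ C' ∧ C' ⊆ (C ∪ ⋃ x ∈ X, Cfam x) \ X)
    (hCM : ∀ I X : Set α, I ⊆ X → CIndep 𝓒 I →
      ∃ J : Set α, Maximal (fun J : Set α => CIndep 𝓒 J ∧ I ⊆ J ∧ J ⊆ X) J)
    (B : Set α) (hB : Maximal (CIndep 𝓒) B) (e : α) (he : e ∉ B) :
    ∀ C₁ C₂ : Set α, C₁ ∈ 𝓒 → C₂ ∈ 𝓒 →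
      C₁ ⊆ insert e B → C₂ ⊆ insert e B → C₁ = C₂ :=
  at_most_one_circuit_in_base_plus_edge_general 𝓒 hC2 hC3 B hB e
end

section
/- For any (possibly infinite) matroid M on ground set E given by independence axioms (I1), (I2), (I3), (IM), the complements of the bases of M again satisfy (B1), (B2) and (BM); hence M has a dual matroid M* whose bases are exactly the complements of the bases of M. -/
open Set

variable {α : Type*}

namespace Matroid

theorem dual_isBase_iff_exists_eq_diff {M : Matroid α} {B : Set α} :
    M✶.IsBase B ↔ ∃ B₀ : Set α, M.IsBase B₀ ∧ B = M.E \ B₀ := by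
  refine ⟨fun hB ↦ ⟨M.E \ B, hB.compl_isBase_of_dual, ?_⟩, ?_⟩
  · exact (sdiff_sdiff_cancel_left hB.subset_ground).symm
  · rintro ⟨B₀, hB₀, rfl⟩
    exact hB₀.compl_isBase_dual

theorem isBase_downClosure_maximality (M : Matroid α) {I X : Set α} (hX : X ⊆ M.E)
    (hIX : I ⊆ X) (hI : ∃ B, M.IsBase B ∧ I ⊆ B) :
    ∃ J : Set α, Maximal (fun J ↦ (∃ B, M.IsBase B ∧ J ⊆ B) ∧ I ⊆ J ∧ J ⊆ X) J := by
  simp_rw [← indep_iff] at hI ⊢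
  obtain ⟨J, hIJ, hJ⟩ := M.maximality X hX I hI hIX
  exact ⟨J, ⟨hJ.1.1, hIJ, hJ.1.2⟩, fun K hK hJK ↦ hJ.2 ⟨hK.1, hK.2.2⟩ hJK⟩

end Matroid

/-- For a (possibly infinite) matroid `M` given by the independence axioms, the
complements (within the ground set) of the bases of `M` satisfy the basis axioms
(B1), (B2) and (BM); hence `M` has a dual matroid whose bases are exactly the
complements of the bases of `M`. -/
theorem dual_matroid_exists (M : Matroid α) :
    -- the collection of complements of bases
    (∃ B : Set α, (∃ B₀ : Set α, M.IsBase B₀ ∧ B = M.E \ B₀)) ∧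
    -- (B2): the exchange axiom for complements of bases
    (∀ B₁ B₂ : Set α,
      (∃ B₀ : Set α, M.IsBase B₀ ∧ B₁ = M.E \ B₀) →
      (∃ B₀ : Set α, M.IsBase B₀ ∧ B₂ = M.E \ B₀) →
      ∀ x ∈ B₁ \ B₂, ∃ y ∈ B₂ \ B₁,
        (∃ B₀ : Set α, M.IsBase B₀ ∧ insert y (B₁ \ {x}) = M.E \ B₀)) ∧
    -- (BM): the down-closure of the complements of bases satisfies the maximality axiom (M)
    (∀ I X : Set α, X ⊆ M.E → I ⊆ X →
      (∃ B : Set α, (∃ B₀ : Set α, M.IsBase B₀ ∧ B = M.E \ B₀) ∧ I ⊆ B) →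
      ∃ J : Set α, Maximal (fun J : Set α =>
        (∃ B : Set α, (∃ B₀ : Set α, M.IsBase B₀ ∧ B = M.E \ B₀) ∧ J ⊆ B) ∧
        I ⊆ J ∧ J ⊆ X) J) ∧
    -- hence there is a dual matroid whose bases are exactly the complements of bases of `M`
    (∃ M' : Matroid α, M'.E = M.E ∧
      ∀ B : Set α, M'.IsBase B ↔ ∃ B₀ : Set α, M.IsBase B₀ ∧ B = M.E \ B₀) := by
  simp_rw [← Matroid.dual_isBase_iff_exists_eq_diff]
  refine ⟨M✶.exists_isBase, fun B₁ B₂ hB₁ hB₂ x hx ↦ hB₁.exchange hB₂ hx,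
    fun I X hX hIX hI ↦ M✶.isBase_downClosure_maximality hX hIX hI, M✶, rfl, fun _ ↦ Iff.rfl⟩
end
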